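/- arXiv:2305.04373 — 9 statements merged into one kernel-verified Lean document; each statement's English description precedes it below -/
import Mathlib

section
/- In Contract 1 with the seller as the (unique) contract player, the inducible sets at the two buyer-owned nodes computed by the InducibleRegion algorithm are singletons: for all real x, y, λ with 0 < x < y and λ > 0, threatenB({u²}, {u¹}) ∪ threatenB({u¹}, {u²}) = {u²} and threatenB({u⁴}, {u³}) ∪ threatenB({u³}, {u⁴}) = {u⁴}. -/
/-- Threats against the buyer (the follower): compare the buyer's coordinate. -/
def threatenB (A B : Set (ℝ × ℝ)) : Set (ℝ × ℝ) := {a ∈ A | ∃ b ∈ B, b.1 < a.1}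

theorem threatenB_singleton_of_lt {a b : ℝ × ℝ} (h : b.1 < a.1) :
    threatenB {a} {b} = {a} := by
  ext p
  simp only [threatenB, Set.mem_ofPred_eq, Set.mem_singleton_iff, exists_eq_left]
  exact ⟨And.left, fun hp => ⟨hp, hp ▸ h⟩⟩

theorem threatenB_singleton_of_le {a b : ℝ × ℝ} (h : a.1 ≤ b.1) :
    threatenB {a} {b} = ∅ := by
  ext p
  simp only [threatenB, Set.mem_ofPred_eq, Set.mem_singleton_iff, exists_eq_left,
    Set.mem_empty_iff_false, iff_false, not_and, not_lt]
  rintro rfl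
  exact h

theorem threatenB_pair_of_lt {a b : ℝ × ℝ} (h : b.1 < a.1) :
    threatenB {a} {b} ∪ threatenB {b} {a} = {a} := by
  rw [threatenB_singleton_of_lt h, threatenB_singleton_of_le h.le, Set.union_empty]

theorem contract1_seller_buyerNodes_general (x y lam : ℝ)
    (hx : 0 < x) (hlam : 0 < lam) :
    let u1 : ℝ × ℝ := (y - x - lam, x)
    let u2 : ℝ × ℝ := (y - x, x)
    let u3 : ℝ × ℝ := (-x - lam, x)
    let u4 : ℝ × ℝ := (0, -lam)
    (threatenB {u2} {u1} ∪ threatenB {u1} {u2} = {u2}) ∧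
    (threatenB {u4} {u3} ∪ threatenB {u3} {u4} = {u4}) := by
  intro u1 u2 u3 u4
  have dispute_lt_accept : u1.1 < u2.1 := by simp only [u1, u2]; linarith
  have accept_lt_dispute : u3.1 < u4.1 := by simp only [u3, u4]; linarith
  exact ⟨threatenB_pair_of_lt dispute_lt_accept, threatenB_pair_of_lt accept_lt_dispute⟩

/-- In Contract 1 with the seller as the (unique) contract player,
the inducible sets at the two buyer-owned nodes are singletons {u²} and {u⁴}. -/
theorem contract1_seller_buyerNodes (x y lam : ℝ)
    (hx : 0 < x) (hxy : x < y) (hlam : 0 < lam) :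
    let u1 : ℝ × ℝ := (y - x - lam, x)
    let u2 : ℝ × ℝ := (y - x, x)
    let u3 : ℝ × ℝ := (-x - lam, x)
    let u4 : ℝ × ℝ := (0, -lam)
    (threatenB {u2} {u1} ∪ threatenB {u1} {u2} = {u2}) ∧
    (threatenB {u4} {u3} ∪ threatenB {u3} {u4} = {u4}) :=
  contract1_seller_buyerNodes_general x y lam hx hlam
end

section
/- In Contract 1 with the seller as leading contract player, the inducible region at the root is {u¹, u², u⁴}: for all real x, y, λ with 0 < x < y, λ > 0, and y - x - λ > 0, one has {u², u⁴} ∪ threatenB({u¹, u², u³, u⁴}, {u², u⁴}) = {u¹, u², u⁴}. -/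
section threatenB

variable {A B : Set (ℝ × ℝ)} {a b : ℝ × ℝ}

theorem threatenB_insert_of_lt (hb : b ∈ B) (hba : b.1 < a.1) :
    threatenB (insert a A) B = insert a (threatenB A B) := by
  ext p
  simp only [threatenB, Set.mem_insert_iff, Set.mem_ofPred_eq]
  constructor
  · rintro ⟨rfl | hp, hthreat⟩
    · exact Or.inl rfl
    · exact Or.inr ⟨hp, hthreat⟩
  · rintro (rfl | ⟨hp, hthreat⟩)
    · exact ⟨Or.inl rfl, b, hb, hba⟩
    · exact ⟨Or.inr hp, hthreat⟩

theorem notMem_threatenB_of_forall_le (h : ∀ b ∈ B, a.1 ≤ b.1) : a ∉ threatenB A B :=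
  fun ⟨_, b, hb, hba⟩ => (h b hb).not_gt hba

theorem threatenB_insert_of_forall_le (h : ∀ b ∈ B, a.1 ≤ b.1) :
    threatenB (insert a A) B = threatenB A B := by
  ext p
  by_cases hp : p = a
  · subst hp
    simp only [notMem_threatenB_of_forall_le h]
  · simp only [threatenB, Set.mem_insert_iff, Set.mem_ofPred_eq, hp, false_or]

theorem threatenB_singleton_of_forall_le (h : ∀ b ∈ B, a.1 ≤ b.1) :
    threatenB {a} B = ∅ := by
  rw [← insert_empty_eq a, threatenB_insert_of_forall_le h]
  exact Set.eq_empty_of_forall_notMem fun _ hp => hp.1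

end threatenB

theorem contract1_seller_root_inducible_general (x y lam : ℝ)
    (hx : 0 < x) (hlam : 0 < lam) (hth : y - x - lam > 0) :
    let u1 : ℝ × ℝ := (y - x - lam, x)
    let u2 : ℝ × ℝ := (y - x, x)
    let u3 : ℝ × ℝ := (-x - lam, x)
    let u4 : ℝ × ℝ := (0, -lam)
    ({u2, u4} : Set (ℝ × ℝ)) ∪ threatenB {u1, u2, u3, u4} {u2, u4} = {u1, u2, u4} := by
  intro u1 u2 u3 u4
  -- The buyer's payoffs on `{u2, u4}` are `y - x > 0` and `0`,
  -- so the threats are the leaves paying him more than `0`.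
  have nonpos_le_B : ∀ a : ℝ × ℝ, a.1 ≤ 0 → ∀ b ∈ ({u2, u4} : Set (ℝ × ℝ)), a.1 ≤ b.1 := by
    rintro a ha b (rfl | rfl)
    · change a.1 ≤ y - x
      linarith
    · exact ha
  have u4_mem : u4 ∈ ({u2, u4} : Set (ℝ × ℝ)) := by simp
  rw [threatenB_insert_of_lt u4_mem (show 0 < y - x - lam from hth),
    threatenB_insert_of_lt u4_mem (show (0 : ℝ) < y - x by linarith),
    threatenB_insert_of_forall_le (nonpos_le_B u3 (show -x - lam ≤ 0 by linarith)),
    threatenB_singleton_of_forall_le (nonpos_le_B u4 le_rfl)]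
  ext p
  simp only [Set.mem_union, Set.mem_insert_iff, Set.mem_singleton_iff,
    Set.mem_empty_iff_false, or_false]
  tauto

/-- In Contract 1 with the seller as leading contract player, the
inducible region at the root is {u¹, u², u⁴}. -/
theorem contract1_seller_root_inducible (x y lam : ℝ)
    (hx : 0 < x) (hxy : x < y) (hlam : 0 < lam) (hth : y - x - lam > 0) :
    let u1 : ℝ × ℝ := (y - x - lam, x)
    let u2 : ℝ × ℝ := (y - x, x)
    let u3 : ℝ × ℝ := (-x - lam, x)
    let u4 : ℝ × ℝ := (0, -lam)
    ({u2, u4} : Set (ℝ × ℝ)) ∪ threatenB {u1, u2, u3, u4} {u2, u4} = {u1, u2, u4} :=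
  contract1_seller_root_inducible_general x y lam hx hlam hth
end

section
/- Contract 1 is not Stackelberg resilient with the seller as leading contract player: for all real x, y, λ with 0 < x < y, λ > 0 and y - x - λ > 0, within the inducible region I = {u¹, u², u⁴} the leaf u¹ is the weakly malicious seller's optimal choice, i.e. (i) for every v ∈ I, v.2 ≤ u¹.2, (ii) for every v ∈ I with v.2 = u¹.2, u¹.1 ≤ v.1 with u¹ being the unique such minimizer among the seller-utility maximizers, and (iii) u¹ ≠ u², so the induced outcome differs from the SPE outcome u² (in particular u¹.1 < u².1, so the buyer is strictly worse off). -/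
/-!
The seller receives the price `x` at both `u¹` and `u²` and loses the deposit at `u⁴`, so his
utility maximizers in `I` are `u¹` and `u²`. They differ only in the buyer's forfeited deposit `λ`,
so a weakly malicious seller breaks the tie towards `u¹`, not towards the SPE outcome `u²`.
-/

def contract1Inducible (x y lam : ℝ) : Set (ℝ × ℝ) :=
  {(y - x - lam, x), (y - x, x), (0, -lam)}

section Contract1

variable {x y lam : ℝ} {v : ℝ × ℝ}

lemma snd_le_of_mem_contract1Inducible (hx : 0 < x) (hlam : 0 < lam)
    (hv : v ∈ contract1Inducible x y lam) : v.2 ≤ x := by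
  rcases hv with rfl | rfl | rfl <;> dsimp <;> linarith

lemma eq_or_eq_of_mem_contract1Inducible_of_snd_eq (hx : 0 < x) (hlam : 0 < lam)
    (hv : v ∈ contract1Inducible x y lam) (hsnd : v.2 = x) :
    v = (y - x - lam, x) ∨ v = (y - x, x) := by
  rcases hv with rfl | rfl | rfl
  · exact Or.inl rfl
  · exact Or.inr rfl
  · exfalso
    dsimp at hsnd
    linarith

end Contract1

theorem contract1_not_resilient_seller_general (x y lam : ℝ)
    (hx : 0 < x) (hlam : 0 < lam) :
    let u1 : ℝ × ℝ := (y - x - lam, x)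
    let u2 : ℝ × ℝ := (y - x, x)
    let u4 : ℝ × ℝ := (0, -lam)
    let I : Set (ℝ × ℝ) := {u1, u2, u4}
    (∀ v ∈ I, v.2 ≤ u1.2) ∧
    (∀ v ∈ I, v.2 = u1.2 → u1.1 ≤ v.1) ∧
    (∀ v ∈ I, v.2 = u1.2 → v ≠ u1 → u1.1 < v.1) ∧
    u1 ≠ u2 ∧ u1.1 < u2.1 := by
  intro u1 u2 u4 I
  have hbuyer : u1.1 < u2.1 := by dsimp [u1, u2]; linarith
  refine ⟨fun v hv => snd_le_of_mem_contract1Inducible hx hlam hv, ?_, ?_,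
    ne_of_apply_ne Prod.fst hbuyer.ne, hbuyer⟩
  · intro v hv hsnd
    rcases eq_or_eq_of_mem_contract1Inducible_of_snd_eq hx hlam hv hsnd with rfl | rfl
    exacts [le_rfl, hbuyer.le]
  · intro v hv hsnd hne
    rcases eq_or_eq_of_mem_contract1Inducible_of_snd_eq hx hlam hv hsnd with rfl | rfl
    exacts [absurd rfl hne, hbuyer]

/-- Contract 1 is not Stackelberg resilient with the seller as
leading contract player: within the inducible region I = {u¹, u², u⁴} the leaf
u¹ is the weakly malicious seller's optimal choice and differs from the SPE
outcome u², with the buyer strictly worse off. -/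
theorem contract1_not_resilient_seller (x y lam : ℝ)
    (hx : 0 < x) (hxy : x < y) (hlam : 0 < lam) (hth : y - x - lam > 0) :
    let u1 : ℝ × ℝ := (y - x - lam, x)
    let u2 : ℝ × ℝ := (y - x, x)
    let u4 : ℝ × ℝ := (0, -lam)
    let I : Set (ℝ × ℝ) := {u1, u2, u4}
    (∀ v ∈ I, v.2 ≤ u1.2) ∧
    (∀ v ∈ I, v.2 = u1.2 → u1.1 ≤ v.1) ∧
    (∀ v ∈ I, v.2 = u1.2 → v ≠ u1 → u1.1 < v.1) ∧
    u1 ≠ u2 ∧ u1.1 < u2.1 :=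
  contract1_not_resilient_seller_general x y lam hx hlam
end

section
/- In Contract 1 with the buyer as leading contract player, the Stackelberg outcome coincides with the SPE: for all real x, y, λ with 0 < x < y and λ > 0, one has threatenS({u¹, u²}, {u³, u⁴}) = {u¹, u²}, and within the resulting inducible region {u¹, u², u³} the leaf u² strictly maximizes the buyer's utility: u².1 > u¹.1 and u².1 > u³.1. -/
/-- Threats against the seller (the follower): compare the seller's coordinate. -/
def threatenS (A B : Set (ℝ × ℝ)) : Set (ℝ × ℝ) := {a ∈ A | ∃ b ∈ B, b.2 < a.2}

theorem threatenS_eq_self_iff {A B : Set (ℝ × ℝ)} :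
    threatenS A B = A ↔ ∀ a ∈ A, ∃ b ∈ B, b.2 < a.2 :=
  Set.sep_eq_self_iff_mem_true

/-- In Contract 1 with the buyer as leading contract player, the
Stackelberg outcome coincides with the SPE: threatenS({u¹,u²},{u³,u⁴}) = {u¹,u²},
and within the inducible region {u¹,u²,u³} the leaf u² strictly maximizes the
buyer's utility. -/
theorem contract1_buyer_leading_SPE (x y lam : ℝ)
    (hx : 0 < x) (hxy : x < y) (hlam : 0 < lam) :
    let u1 : ℝ × ℝ := (y - x - lam, x)
    let u2 : ℝ × ℝ := (y - x, x)
    let u3 : ℝ × ℝ := (-x - lam, x)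
    let u4 : ℝ × ℝ := (0, -lam)
    (threatenS {u1, u2} {u3, u4} = {u1, u2}) ∧
    u2.1 > u1.1 ∧ u2.1 > u3.1 := by
  intro u1 u2 u3 u4
  -- The seller's payoff x in u¹ and u² is beaten by the lost deposit -λ in u⁴.
  have h_threat : ∀ a ∈ ({u1, u2} : Set (ℝ × ℝ)), ∃ b ∈ ({u3, u4} : Set (ℝ × ℝ)), b.2 < a.2 := by
    rintro a (rfl | rfl) <;> exact ⟨u4, Or.inr rfl, by simp only [u1, u2, u4]; linarith⟩
  refine ⟨threatenS_eq_self_iff.mpr h_threat, ?_, ?_⟩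
  · simp only [u1, u2, gt_iff_lt]; linarith
  · simp only [u2, u3, gt_iff_lt]; linarith
end

section
/- In Contract 2 with the seller as leading contract player, the inducible set at the left buyer-owned node is {u¹, u³}: for all real x, x', y, λ, γ with 0 < γ < 1, y > x > x' > 0, λ > 0 and γ·x < (1-γ)·λ, one has threatenB({u³}, {u¹, u²}) ∪ threatenB({u¹, u²}, {u³}) = {u¹, u³}. -/
theorem threatenB_singleton_of_mem {a b : ℝ × ℝ} {B : Set (ℝ × ℝ)} (hb : b ∈ B) (hba : b.1 < a.1) :
    threatenB {a} B = {a} :=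
  Set.sep_eq_self_iff_mem_true.mpr fun _ hp => ⟨b, hb, hp ▸ hba⟩

theorem threatenB_singleton_right (A : Set (ℝ × ℝ)) (b : ℝ × ℝ) :
    threatenB A {b} = {a ∈ A | b.1 < a.1} := by
  simp [threatenB]

theorem threatenB_singleton_union_pair {a b c : ℝ × ℝ} (hca : c.1 < a.1) (hab : a.1 < b.1) :
    threatenB {a} {b, c} ∪ threatenB {b, c} {a} = {b, a} := by
  rw [threatenB_singleton_of_mem (by simp) hca, threatenB_singleton_right]
  ext p
  simp only [Set.mem_union, Set.mem_singleton_iff, Set.mem_ofPred_eq, Set.mem_insert_iff]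
  constructor
  · rintro (rfl | ⟨rfl | rfl, hap⟩)
    · exact Or.inr rfl
    · exact Or.inl rfl
    · exact absurd hca hap.asymm
  · rintro (rfl | rfl)
    · exact Or.inr ⟨Or.inl rfl, hab⟩
    · exact Or.inl rfl

theorem contract2_seller_leftNode_general (x x' y lam γ : ℝ)
    (hγ1 : γ < 1) (hxy : x < y) (hx'x : x' < x) (hx' : 0 < x')
    (hdep : γ * x < (1 - γ) * lam) :
    let u1 : ℝ × ℝ := (y, -x')
    let u2 : ℝ × ℝ := (y * γ - (x + lam) * (1 - γ), x * (1 - γ) - lam * γ - x')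
    let u3 : ℝ × ℝ := (y - x, x - x')
    threatenB {u3} {u1, u2} ∪ threatenB {u1, u2} {u3} = {u1, u3} := by
  intro u1 u2 u3
  have hx : 0 < x := hx'.trans hx'x
  -- `u3.1 - u2.1 = (1 - γ) y + ((1 - γ) λ - γ x)`
  have h23 : u2.1 < u3.1 := by
    show y * γ - (x + lam) * (1 - γ) < y - x
    linarith [mul_pos (sub_pos.mpr hγ1) (hx.trans hxy)]
  have h31 : u3.1 < u1.1 := sub_lt_self y hx
  exact threatenB_singleton_union_pair h23 h31

/-- In Contract 2 with the seller as leading contract player, the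
inducible set at the left buyer-owned node is {u¹, u³}. -/
theorem contract2_seller_leftNode (x x' y lam γ : ℝ)
    (hγ0 : 0 < γ) (hγ1 : γ < 1) (hxy : x < y) (hx'x : x' < x) (hx' : 0 < x')
    (hlam : 0 < lam) (hdep : γ * x < (1 - γ) * lam) :
    let u1 : ℝ × ℝ := (y, -x')
    let u2 : ℝ × ℝ := (y * γ - (x + lam) * (1 - γ), x * (1 - γ) - lam * γ - x')
    let u3 : ℝ × ℝ := (y - x, x - x')
    threatenB {u3} {u1, u2} ∪ threatenB {u1, u2} {u3} = {u1, u3} :=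
  contract2_seller_leftNode_general x x' y lam γ hγ1 hxy hx'x hx' hdep
end

section
/- In Contract 2 with the seller as leading contract player, the inducible set at the right buyer-owned node is {u⁵, u⁶}: for all real x, x', y, λ, γ with 0 < γ < 1, y > x > x' > 0, λ > 0 and γ·λ < (1-γ)·x, one has threatenB({u⁴}, {u⁵, u⁶}) ∪ threatenB({u⁵, u⁶}, {u⁴}) = {u⁵, u⁶}. -/
theorem threatenB_eq_empty {A B : Set (ℝ × ℝ)} (h : ∀ a ∈ A, ∀ b ∈ B, a.1 ≤ b.1) :
    threatenB A B = ∅ :=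
  Set.eq_empty_of_forall_notMem fun a ⟨ha, b, hb, hlt⟩ => (h a ha b hb).not_gt hlt

theorem threatenB_eq_self {A B : Set (ℝ × ℝ)} (h : ∀ a ∈ A, ∃ b ∈ B, b.1 < a.1) :
    threatenB A B = A :=
  Set.sep_eq_self_iff_mem_true.mpr h

theorem contract2_seller_rightNode_general (x x' lam γ : ℝ)
    (hx'x : x' < x) (hx' : 0 < x')
    (hdep : γ * lam < (1 - γ) * x) :
    let u4 : ℝ × ℝ := (-x, x)
    let u5 : ℝ × ℝ := (-(x + lam) * γ, x * γ - lam * (1 - γ))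
    let u6 : ℝ × ℝ := (0, 0)
    threatenB {u4} {u5, u6} ∪ threatenB {u5, u6} {u4} = {u5, u6} := by
  intro u4 u5 u6
  have h45 : u4.1 < u5.1 := by simp only [u4, u5]; linarith
  have h46 : u4.1 < u6.1 := by simp only [u4, u6]; linarith
  rw [threatenB_eq_empty, threatenB_eq_self, Set.empty_union]
  · rintro a (rfl | rfl) <;> exact ⟨u4, rfl, by assumption⟩
  · rintro a rfl b (rfl | rfl) <;> exact le_of_lt (by assumption)

/-- In Contract 2 with the seller as leading contract player, the
inducible set at the right buyer-owned node is {u⁵, u⁶}. -/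
theorem contract2_seller_rightNode (x x' y lam γ : ℝ)
    (hγ0 : 0 < γ) (hγ1 : γ < 1) (hxy : x < y) (hx'x : x' < x) (hx' : 0 < x')
    (hlam : 0 < lam) (hdep : γ * lam < (1 - γ) * x) :
    let u4 : ℝ × ℝ := (-x, x)
    let u5 : ℝ × ℝ := (-(x + lam) * γ, x * γ - lam * (1 - γ))
    let u6 : ℝ × ℝ := (0, 0)
    threatenB {u4} {u5, u6} ∪ threatenB {u5, u6} {u4} = {u5, u6} :=
  contract2_seller_rightNode_general x x' lam γ hx'x hx' hdep
end

section
/- Contract 2 is Stackelberg resilient when the seller is leading contract player: for all real x, x', y, λ, γ with 0 < γ < 1/2, y > x > x' > 0, λ > 0, γ·x < (1-γ)·λ and γ·λ < (1-γ)·x, in the seller's root inducible region I := {u¹, u³, u⁵, u⁶} ∪ threatenB({u¹, u², u³, u⁴, u⁵, u⁶}, {u¹, u³, u⁵, u⁶}), the honest outcome u³ strictly maximizes the seller's utility: u³ ∈ I and for every v ∈ I with v ≠ u³ one has v.2 < u³.2. Hence the seller's optimal contract induces the SPE outcome u³. -/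
/-!
Only `u⁴` pays the seller more than the honest `x - x'`, and it is not inducible: it is not one
of `u¹, u³, u⁵, u⁶`, and none of these threatens the buyer there, since `γλ < (1 - γ)x` gives
the buyer at `u⁵` at least his `-x` at `u⁴`. Among the remaining leaves, `u²` costs the seller
`γ(x + λ)` against `u³`, and `γx < (1 - γ)λ` makes the seller's payoff at `u⁵` negative.
-/

theorem threatenB_subset (A B : Set (ℝ × ℝ)) : threatenB A B ⊆ A :=
  Set.sep_subset A _

theorem union_threatenB_subset {A B : Set (ℝ × ℝ)} (hBA : B ⊆ A) : B ∪ threatenB A B ⊆ A :=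
  Set.union_subset hBA (threatenB_subset A B)

theorem notMem_union_threatenB {A B : Set (ℝ × ℝ)} {a : ℝ × ℝ}
    (h₂ : ∀ b ∈ B, b.2 < a.2) (h₁ : ∀ b ∈ B, a.1 ≤ b.1) : a ∉ B ∪ threatenB A B := by
  rintro (ha | ⟨-, b, hb, hba⟩)
  · exact lt_irrefl _ (h₂ a ha)
  · exact (h₁ b hb).not_gt hba

theorem contract2_seller_resilient_general (x x' y lam γ : ℝ)
    (hγ0 : 0 < γ) (hxy : x < y) (hx'x : x' < x) (hx' : 0 < x')
    (hlam : 0 < lam) (hdep1 : γ * x < (1 - γ) * lam) (hdep2 : γ * lam < (1 - γ) * x) :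
    let u1 : ℝ × ℝ := (y, -x')
    let u2 : ℝ × ℝ := (y * γ - (x + lam) * (1 - γ), x * (1 - γ) - lam * γ - x')
    let u3 : ℝ × ℝ := (y - x, x - x')
    let u4 : ℝ × ℝ := (-x, x)
    let u5 : ℝ × ℝ := (-(x + lam) * γ, x * γ - lam * (1 - γ))
    let u6 : ℝ × ℝ := (0, 0)
    let I : Set (ℝ × ℝ) :=
      {u1, u3, u5, u6} ∪ threatenB {u1, u2, u3, u4, u5, u6} {u1, u3, u5, u6}
    u3 ∈ I ∧ ∀ v ∈ I, v ≠ u3 → v.2 < u3.2 := by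
  intro u1 u2 u3 u4 u5 u6 I
  have hx : 0 < x := hx'.trans hx'x
  have hu4 : u4 ∉ I := by
    apply notMem_union_threatenB <;>
      simp only [Set.forall_mem_insert, Set.mem_singleton_iff, forall_eq, u1, u3, u4, u5, u6] <;>
      refine ⟨?_, ?_, ?_, ?_⟩ <;> linarith
  have hIA : I ⊆ {u1, u2, u3, u4, u5, u6} :=
    union_threatenB_subset (by intro v; simp only [Set.mem_insert_iff]; tauto)
  refine ⟨Or.inl (Set.mem_insert_of_mem _ (Set.mem_insert _ _)), fun v hv hne => ?_⟩
  rcases hIA hv with rfl | rfl | rfl | rfl | rfl | rfl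
  · show -x' < x - x'
    linarith
  · show x * (1 - γ) - lam * γ - x' < x - x'
    linarith [mul_pos hγ0 (add_pos hx hlam)]
  · exact absurd rfl hne
  · exact absurd hv hu4
  · show x * γ - lam * (1 - γ) < x - x'
    linarith
  · show (0 : ℝ) < x - x'
    linarith

/-- Contract 2 is Stackelberg resilient when the seller is
leading contract player: in the seller's root inducible region, the honest
outcome u³ strictly maximizes the seller's utility. -/
theorem contract2_seller_resilient (x x' y lam γ : ℝ)
    (hγ0 : 0 < γ) (hγ1 : γ < 1 / 2) (hxy : x < y) (hx'x : x' < x) (hx' : 0 < x')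
    (hlam : 0 < lam) (hdep1 : γ * x < (1 - γ) * lam) (hdep2 : γ * lam < (1 - γ) * x) :
    let u1 : ℝ × ℝ := (y, -x')
    let u2 : ℝ × ℝ := (y * γ - (x + lam) * (1 - γ), x * (1 - γ) - lam * γ - x')
    let u3 : ℝ × ℝ := (y - x, x - x')
    let u4 : ℝ × ℝ := (-x, x)
    let u5 : ℝ × ℝ := (-(x + lam) * γ, x * γ - lam * (1 - γ))
    let u6 : ℝ × ℝ := (0, 0)
    let I : Set (ℝ × ℝ) :=
      {u1, u3, u5, u6} ∪ threatenB {u1, u2, u3, u4, u5, u6} {u1, u3, u5, u6}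
    u3 ∈ I ∧ ∀ v ∈ I, v ≠ u3 → v.2 < u3.2 :=
  contract2_seller_resilient_general x x' y lam γ hγ0 hxy hx'x hx' hlam hdep1 hdep2
end

section
/- In Contract 2 with the buyer as leading contract player, the inducible sets at the two seller-owned deepest nodes are singletons: for all real x, x', y, λ, γ with 0 < γ < 1, y > x > x' > 0, λ > 0, γ·λ < (1-γ)·x and γ·x < (1-γ)·λ, one has threatenS({u¹}, {u²}) ∪ threatenS({u²}, {u¹}) = {u²} and threatenS({u⁵}, {u⁶}) ∪ threatenS({u⁶}, {u⁵}) = {u⁶}. -/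
theorem threatenS_singleton_of_lt {a b : ℝ × ℝ} (h : b.2 < a.2) :
    threatenS {a} {b} = {a} := by
  ext p
  simp only [threatenS, Set.mem_ofPred_eq, Set.mem_singleton_iff, exists_eq_left]
  exact ⟨And.left, fun hp => ⟨hp, hp ▸ h⟩⟩

theorem threatenS_singleton_of_le {a b : ℝ × ℝ} (h : a.2 ≤ b.2) :
    threatenS {a} {b} = ∅ := by
  ext p
  simp only [threatenS, Set.mem_ofPred_eq, Set.mem_singleton_iff, exists_eq_left,
    Set.mem_empty_iff_false, iff_false, not_and, not_lt]
  rintro rfl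
  exact h

theorem threatenS_singleton_union_of_lt {a b : ℝ × ℝ} (h : a.2 < b.2) :
    threatenS {a} {b} ∪ threatenS {b} {a} = {b} := by
  rw [threatenS_singleton_of_le h.le, threatenS_singleton_of_lt h, Set.empty_union]

theorem contract2_buyer_sellerNodes_general (x x' y lam γ : ℝ)
    (hdep1 : γ * lam < (1 - γ) * x) (hdep2 : γ * x < (1 - γ) * lam) :
    let u1 : ℝ × ℝ := (y, -x')
    let u2 : ℝ × ℝ := (y * γ - (x + lam) * (1 - γ), x * (1 - γ) - lam * γ - x')
    let u5 : ℝ × ℝ := (-(x + lam) * γ, x * γ - lam * (1 - γ))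
    let u6 : ℝ × ℝ := (0, 0)
    (threatenS {u1} {u2} ∪ threatenS {u2} {u1} = {u2}) ∧
    (threatenS {u5} {u6} ∪ threatenS {u6} {u5} = {u6}) :=
  -- `u2.2 - u1.2 = (1 - γ) * x - γ * lam` and `u6.2 - u5.2 = (1 - γ) * lam - γ * x`.
  ⟨threatenS_singleton_union_of_lt (by dsimp only; linarith),
    threatenS_singleton_union_of_lt (by dsimp only; linarith)⟩

/-- In Contract 2 with the buyer as leading contract player, the
inducible sets at the two seller-owned deepest nodes are the singletons {u²}
and {u⁶}. -/
theorem contract2_buyer_sellerNodes (x x' y lam γ : ℝ)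
    (hγ0 : 0 < γ) (hγ1 : γ < 1) (hxy : x < y) (hx'x : x' < x) (hx' : 0 < x')
    (hlam : 0 < lam) (hdep1 : γ * lam < (1 - γ) * x) (hdep2 : γ * x < (1 - γ) * lam) :
    let u1 : ℝ × ℝ := (y, -x')
    let u2 : ℝ × ℝ := (y * γ - (x + lam) * (1 - γ), x * (1 - γ) - lam * γ - x')
    let u5 : ℝ × ℝ := (-(x + lam) * γ, x * γ - lam * (1 - γ))
    let u6 : ℝ × ℝ := (0, 0)
    (threatenS {u1} {u2} ∪ threatenS {u2} {u1} = {u2}) ∧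
    (threatenS {u5} {u6} ∪ threatenS {u6} {u5} = {u6}) :=
  contract2_buyer_sellerNodes_general x x' y lam γ hdep1 hdep2
end

section
/- In Contract 2 with the buyer as leading contract player, the inducible set at the left buyer-owned node is {u², u³}: for all real x, x', y, λ, γ with 0 < γ < 1, y > x > x' > 0, λ > 0 and γ·λ < (1-γ)·x, one has {u², u³} ∪ threatenS({u¹, u², u³}, {u², u³}) = {u², u³}; in particular u¹ cannot be threatened into the set. -/
theorem threatenS_subset (A B : Set (ℝ × ℝ)) : threatenS A B ⊆ A :=
  fun _ ha => ha.1

theorem notMem_threatenS_of_forall_le {A B : Set (ℝ × ℝ)} {a : ℝ × ℝ}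
    (h : ∀ b ∈ B, a.2 ≤ b.2) : a ∉ threatenS A B :=
  fun ⟨_, b, hb, hlt⟩ => (h b hb).not_gt hlt

theorem union_threatenS_insert_eq {B : Set (ℝ × ℝ)} {a : ℝ × ℝ}
    (h : ∀ b ∈ B, a.2 ≤ b.2) : B ∪ threatenS (insert a B) B = B := by
  refine Set.union_eq_left.mpr fun c hc => ?_
  rcases threatenS_subset _ _ hc with rfl | hcB
  · exact absurd hc (notMem_threatenS_of_forall_le h)
  · exact hcB

theorem notMem_union_threatenS_insert {B : Set (ℝ × ℝ)} {a : ℝ × ℝ}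
    (h : ∀ b ∈ B, a.2 < b.2) : a ∉ B ∪ threatenS (insert a B) B := by
  rw [union_threatenS_insert_eq fun b hb => (h b hb).le]
  exact fun ha => (h a ha).false

theorem contract2_buyer_leftNode_general (x x' y lam γ : ℝ)
    (hx'x : x' < x) (hx' : 0 < x')
    (hdep : γ * lam < (1 - γ) * x) :
    let u1 : ℝ × ℝ := (y, -x')
    let u2 : ℝ × ℝ := (y * γ - (x + lam) * (1 - γ), x * (1 - γ) - lam * γ - x')
    let u3 : ℝ × ℝ := (y - x, x - x')
    (({u2, u3} : Set (ℝ × ℝ)) ∪ threatenS {u1, u2, u3} {u2, u3} = {u2, u3}) ∧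
    u1 ∉ ({u2, u3} : Set (ℝ × ℝ)) ∪ threatenS {u1, u2, u3} {u2, u3} := by
  intro u1 u2 u3
  -- For `u2` this is the deposit condition `hdep`; for `u3` it is `0 < x`.
  have hu1_lt : ∀ b ∈ ({u2, u3} : Set (ℝ × ℝ)), u1.2 < b.2 := by
    simp only [Set.forall_mem_insert, Set.mem_singleton_iff, forall_eq, u1, u2, u3]
    constructor <;> linarith
  exact ⟨union_threatenS_insert_eq fun b hb => (hu1_lt b hb).le,
    notMem_union_threatenS_insert hu1_lt⟩

/-- In Contract 2 with the buyer as leading contract player, the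
inducible set at the left buyer-owned node is {u², u³}; in particular u¹ cannot
be threatened into the set. -/
theorem contract2_buyer_leftNode (x x' y lam γ : ℝ)
    (hγ0 : 0 < γ) (hγ1 : γ < 1) (hxy : x < y) (hx'x : x' < x) (hx' : 0 < x')
    (hlam : 0 < lam) (hdep : γ * lam < (1 - γ) * x) :
    let u1 : ℝ × ℝ := (y, -x')
    let u2 : ℝ × ℝ := (y * γ - (x + lam) * (1 - γ), x * (1 - γ) - lam * γ - x')
    let u3 : ℝ × ℝ := (y - x, x - x')
    (({u2, u3} : Set (ℝ × ℝ)) ∪ threatenS {u1, u2, u3} {u2, u3} = {u2, u3}) ∧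
    u1 ∉ ({u2, u3} : Set (ℝ × ℝ)) ∪ threatenS {u1, u2, u3} {u2, u3} :=
  contract2_buyer_leftNode_general x x' y lam γ hx'x hx' hdep
end
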